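/- arXiv:2207.07108 — 2 statements merged into one kernel-verified Lean document; each statement's English description precedes it below -/
import Mathlib

section
/- The Artin-Hasse exponential series F(z) = exp(Σ_{j≥0} z^{p^j}/p^j) has all coefficients in ℤ_(p), i.e. every coefficient is a rational number with denominator prime to p. -/
open PowerSeries in
/-- The exponential `exp f = Σ_k f^k / k!` of a power series (intended for `f` with zero
constant term, in which case the coefficientwise sums are finite). -/
noncomputable def PowerSeriesExpOf (f : PowerSeries ℚ) : PowerSeries ℚ :=
  PowerSeries.mk fun n =>
    ∑ k ∈ Finset.range (n + 1), (1 / (Nat.factorial k : ℚ)) * coeff n (f ^ k)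

open scoped Classical in
/-- The series Σ_{j ≥ 0} z^{p^j}/p^j: its coefficient at n = p^j is 1/p^j = 1/n. -/
noncomputable def AHinner (p : ℕ) : PowerSeries ℚ :=
  PowerSeries.mk fun n => if ∃ j : ℕ, n = p ^ j then (1 : ℚ) / n else 0

/-- The Artin–Hasse exponential series F(z) = exp(Σ_{j≥0} z^{p^j}/p^j) ∈ ℚ⟦z⟧. -/
noncomputable def ArtinHasse (p : ℕ) : PowerSeries ℚ := PowerSeriesExpOf (AHinner p)

/-!
`PowerSeriesExpOf f` is the substitution of `f` into `exp`, hence the solution of `y' = y f'` with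
`y(0) = 1`; by uniqueness of such solutions it turns sums into products. Together with
`p • AHinner p = AHinner p (X ^ p) + p • X` this gives Dwork's functional equation
`F ^ p = F (X ^ p) * exp (p X)`, and as `pⁿ / n!` is divisible by `p` for `n ≥ 1`, it says
`F ^ p ≡ F (X ^ p) mod p`. Integrality of the coefficients `aₙ` then follows by induction on `n`:
if `G` is the truncation of `F` below `Xⁿ` and is integral, then `G ^ p ≡ G (X ^ p) mod p` by
Frobenius, while the coefficients of `Xⁿ` in `F ^ p` and `G ^ p` differ by `p aₙ`.
-/

open PowerSeries

namespace PowerSeries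

theorem eq_zero_of_derivative_eq_mul {R : Type*} [CommRing R] [IsAddTorsionFree R]
    {g h : R⟦X⟧} (hg : d⁄dX R g = g * h) (hg0 : constantCoeff g = 0) : g = 0 := by
  suffices ∀ n, ∀ i ≤ n, coeff i g = 0 from ext fun n => by simpa using this n n le_rfl
  intro n
  induction n with
  | zero => simpa using hg0
  | succ n ih =>
    intro i hi
    rcases Nat.lt_or_eq_of_le hi with hi | rfl
    · exact ih i (by omega)
    have hgh : coeff n (g * h) = 0 := by
      simpa using coeff_mul_mem_ideal_of_coeff_left_mem_ideal (I := ⊥) (g := h) n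
        (by simpa using ih) n le_rfl
    rw [← hg, coeff_derivative, ← Nat.cast_succ, mul_comm, ← nsmul_eq_mul] at hgh
    exact (nsmul_eq_zero_iff_right n.succ_ne_zero).mp hgh

theorem eq_of_derivative_eq_mul {R : Type*} [CommRing R] [IsAddTorsionFree R]
    {g₁ g₂ h : R⟦X⟧} (h₁ : d⁄dX R g₁ = g₁ * h) (h₂ : d⁄dX R g₂ = g₂ * h)
    (hc : constantCoeff g₁ = constantCoeff g₂) : g₁ = g₂ :=
  sub_eq_zero.mp <| eq_zero_of_derivative_eq_mul (by rw [map_sub, h₁, h₂, sub_mul])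
    (by rw [map_sub, hc, sub_self])

theorem coeff_add_pow_of_X_pow_dvd {R : Type*} [CommRing R] {g h : R⟦X⟧} {n : ℕ} (hn : 0 < n)
    (hh : X ^ n ∣ h) (m : ℕ) :
    coeff n ((g + h) ^ m) = coeff n (g ^ m) + m * constantCoeff g ^ (m - 1) * coeff n h := by
  obtain ⟨k, hk⟩ := Polynomial.binomExpansion (Polynomial.X ^ m) g h
  simp only [Polynomial.eval_pow, Polynomial.eval_X, Polynomial.derivative_X_pow,
    Polynomial.eval_mul, Polynomial.eval_C] at hk
  have hsq : coeff n (k * h ^ 2) = 0 := by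
    have hX : (X : R⟦X⟧) ^ (n * 2) ∣ h ^ 2 := by
      rw [pow_mul]
      exact pow_dvd_pow_of_dvd hh 2
    exact X_pow_dvd_iff.mp (((pow_dvd_pow X (by omega)).trans hX).mul_left k) n n.lt_succ_self
  obtain ⟨q, rfl⟩ := hh
  rw [hk, map_add, map_add, hsq, add_zero, mul_left_comm, coeff_X_pow_mul', if_pos le_rfl,
    Nat.sub_self, coeff_zero_eq_constantCoeff_apply]
  simp [coeff_X_pow_mul']

theorem norm_coeff_mul_le {R : Type*} [NormedRing R] [IsUltrametricDist R] {f g : R⟦X⟧}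
    {n : ℕ} {a b : ℝ} (hf : ∀ i ≤ n, ‖coeff i f‖ ≤ a) (hg : ∀ j ≤ n, ‖coeff j g‖ ≤ b) :
    ‖coeff n (f * g)‖ ≤ a * b := by
  have ha : 0 ≤ a := (norm_nonneg _).trans (hf 0 n.zero_le)
  have hb : 0 ≤ b := (norm_nonneg _).trans (hg 0 n.zero_le)
  rw [coeff_mul]
  refine IsUltrametricDist.norm_sum_le_of_forall_le_of_nonneg (mul_nonneg ha hb) fun ij hij => ?_
  exact (norm_mul_le _ _).trans <|
    mul_le_mul (hf _ (Finset.HasAntidiagonal.antidiagonal.fst_le hij))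
      (hg _ (Finset.HasAntidiagonal.antidiagonal.snd_le hij)) (norm_nonneg _) ha

end PowerSeries

section PowerSeriesExpOf

variable {f g : ℚ⟦X⟧}

theorem powerSeriesExpOf_eq_subst (hf : constantCoeff f = 0) :
    PowerSeriesExpOf f = (exp ℚ).subst f := by
  ext n
  have hsupp : (Function.support fun d => coeff d (exp ℚ) • coeff n (f ^ d)) ⊆
      Finset.range (n + 1) := by
    intro d hd
    by_contra hdn
    refine hd ?_
    have hdvd : X ^ d ∣ f ^ d := pow_dvd_pow_of_dvd (X_dvd_iff.mpr hf) d
    simp only [X_pow_dvd_iff.mp hdvd n (by simpa using hdn), smul_zero]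
  rw [PowerSeriesExpOf, coeff_mk, coeff_subst' (HasSubst.of_constantCoeff_zero' hf),
    finsum_eq_sum_of_support_subset _ hsupp]
  simp

theorem constantCoeff_powerSeriesExpOf (f : ℚ⟦X⟧) :
    constantCoeff (PowerSeriesExpOf f) = 1 := by
  rw [← coeff_zero_eq_constantCoeff_apply, PowerSeriesExpOf, coeff_mk]
  simp

theorem derivative_powerSeriesExpOf (hf : constantCoeff f = 0) :
    d⁄dX ℚ (PowerSeriesExpOf f) = PowerSeriesExpOf f * d⁄dX ℚ f := by
  rw [powerSeriesExpOf_eq_subst hf, derivative_subst (HasSubst.of_constantCoeff_zero' hf),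
    derivative_exp]

theorem powerSeriesExpOf_zero : PowerSeriesExpOf 0 = 1 :=
  eq_of_derivative_eq_mul (h := 0)
    (by rw [derivative_powerSeriesExpOf (map_zero _), map_zero]) (by simp)
    (by rw [constantCoeff_powerSeriesExpOf, map_one])

theorem powerSeriesExpOf_add (hf : constantCoeff f = 0) (hg : constantCoeff g = 0) :
    PowerSeriesExpOf (f + g) = PowerSeriesExpOf f * PowerSeriesExpOf g := by
  have hfg : constantCoeff (f + g) = 0 := by rw [map_add, hf, hg, add_zero]
  refine eq_of_derivative_eq_mul (derivative_powerSeriesExpOf hfg) ?_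
    (by simp [constantCoeff_powerSeriesExpOf])
  rw [Derivation.leibniz, derivative_powerSeriesExpOf hf, derivative_powerSeriesExpOf hg, map_add,
    smul_eq_mul, smul_eq_mul]
  ring

theorem powerSeriesExpOf_nsmul (hf : constantCoeff f = 0) (n : ℕ) :
    PowerSeriesExpOf (n • f) = PowerSeriesExpOf f ^ n := by
  induction n with
  | zero => rw [zero_smul, powerSeriesExpOf_zero, pow_zero]
  | succ n ih => rw [succ_nsmul, powerSeriesExpOf_add (by simp [hf]) hf, ih, pow_succ]

theorem expand_powerSeriesExpOf (p : ℕ) (hp : p ≠ 0) (hf : constantCoeff f = 0) :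
    expand p hp (PowerSeriesExpOf f) = PowerSeriesExpOf (expand p hp f) := by
  rw [powerSeriesExpOf_eq_subst hf, powerSeriesExpOf_eq_subst (by simp [hf])]
  exact expand_subst p hp (HasSubst.of_constantCoeff_zero' hf) (exp ℚ)

theorem powerSeriesExpOf_smul_X (a : ℚ) : PowerSeriesExpOf (a • X) = rescale a (exp ℚ) := by
  rw [powerSeriesExpOf_eq_subst (by simp), rescale_eq_subst]

end PowerSeriesExpOf

theorem Nat.Prime.exists_mul_eq_pow_iff {p : ℕ} (hp : p.Prime) {m : ℕ} :
    (∃ j, p * m = p ^ j) ↔ ∃ j, m = p ^ j := by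
  constructor
  · rintro ⟨_ | j, hj⟩
    · exact absurd (Nat.eq_one_of_mul_eq_one_right hj) hp.ne_one
    · exact ⟨j, Nat.eq_of_mul_eq_mul_left hp.pos (hj.trans (by ring))⟩
  · rintro ⟨j, rfl⟩
    exact ⟨j + 1, by ring⟩

theorem constantCoeff_AHinner (p : ℕ) : constantCoeff (AHinner p) = 0 := by
  rw [← coeff_zero_eq_constantCoeff_apply, AHinner, coeff_mk]
  split_ifs <;> simp

theorem natCast_smul_AHinner {p : ℕ} (hp : p.Prime) :
    (p : ℚ) • AHinner p = expand p hp.ne_zero (AHinner p) + (p : ℚ) • X := by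
  ext n
  simp only [map_add, coeff_smul, coeff_expand, coeff_X, AHinner, coeff_mk, smul_eq_mul]
  by_cases hn1 : n = 1
  · subst hn1
    rw [if_pos ⟨0, (pow_zero p).symm⟩]
    simp [Nat.dvd_one, hp.ne_one]
  by_cases hdvd : p ∣ n
  · obtain ⟨m, rfl⟩ := hdvd
    rw [if_pos (dvd_mul_right p m), Nat.mul_div_cancel_left m hp.pos, if_neg hn1, mul_zero,
      add_zero]
    split_ifs with h₁ h₂ h₂
    · have : (p : ℚ) ≠ 0 := by exact_mod_cast hp.ne_zero
      push_cast
      field_simp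
    · exact absurd (hp.exists_mul_eq_pow_iff.mp h₁) h₂
    · exact absurd (hp.exists_mul_eq_pow_iff.mpr h₂) h₁
    · rw [mul_zero]
  · have hpow : ¬ ∃ j, n = p ^ j := by
      rintro ⟨_ | j, rfl⟩
      · exact hn1 rfl
      · exact hdvd (dvd_pow_self p j.succ_ne_zero)
    simp [hpow, hdvd, hn1]

theorem constantCoeff_artinHasse (p : ℕ) : constantCoeff (ArtinHasse p) = 1 :=
  constantCoeff_powerSeriesExpOf _

theorem artinHasse_pow_eq {p : ℕ} (hp : p.Prime) :
    ArtinHasse p ^ p = expand p hp.ne_zero (ArtinHasse p) * rescale (p : ℚ) (exp ℚ) := by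
  have h0 := constantCoeff_AHinner p
  rw [ArtinHasse, ← powerSeriesExpOf_nsmul h0, ← Nat.cast_smul_eq_nsmul ℚ,
    natCast_smul_AHinner hp, powerSeriesExpOf_add (by simp [h0]) (by simp),
    expand_powerSeriesExpOf _ _ h0, powerSeriesExpOf_smul_X]

section Padic

variable {p : ℕ} [hp : Fact p.Prime]

theorem PadicInt.norm_coeff_pow_sub_expand_le (f : Polynomial ℤ_[p]) (n : ℕ) :
    ‖(f ^ p - Polynomial.expand ℤ_[p] p f).coeff n‖ ≤ (p : ℝ)⁻¹ := by
  have hker : (f ^ p - Polynomial.expand ℤ_[p] p f).coeff n ∈ RingHom.ker PadicInt.toZMod := by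
    rw [RingHom.mem_ker, ← Polynomial.coeff_map, Polynomial.map_sub, Polynomial.map_pow,
      Polynomial.map_expand, ZMod.expand_card, sub_self, Polynomial.coeff_zero]
  rw [PadicInt.ker_toZMod, IsLocalRing.mem_maximalIdeal, PadicInt.mem_nonunits] at hker
  simpa using (PadicInt.norm_le_pow_iff_norm_lt_pow_add_one _ (-1)).mpr (by simpa using hker)

theorem Padic.norm_coeff_pow_sub_expand_le {f : Polynomial ℚ_[p]} (hf : ∀ i, ‖f.coeff i‖ ≤ 1)
    (n : ℕ) : ‖(f ^ p - Polynomial.expand ℚ_[p] p f).coeff n‖ ≤ (p : ℝ)⁻¹ := by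
  obtain ⟨g, rfl⟩ : f ∈ Polynomial.lifts (PadicInt.Coe.ringHom (p := p)) :=
    (Polynomial.lifts_iff_coeff_lifts f).mpr fun i => ⟨⟨_, hf i⟩, rfl⟩
  rw [Polynomial.coe_mapRingHom, ← Polynomial.map_pow, ← Polynomial.map_expand,
    ← Polynomial.map_sub, Polynomial.coeff_map]
  exact (PadicInt.padic_norm_e_of_padicInt _).trans_le
    (PadicInt.norm_coeff_pow_sub_expand_le g n)

theorem Padic.norm_natCast_pow_div_factorial_le {n : ℕ} (hn : n ≠ 0) :
    ‖(p : ℚ_[p]) ^ n / n.factorial‖ ≤ (p : ℝ)⁻¹ := by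
  have hv := padicValNat_factorial_lt_of_ne_zero p hn
  have hp1 : (1 : ℝ) ≤ p := by exact_mod_cast hp.out.one_le
  rw [norm_div, Padic.norm_p_pow,
    Padic.norm_eq_zpow_neg_valuation (by exact_mod_cast n.factorial_ne_zero),
    Padic.valuation_natCast, ← zpow_sub₀ (by positivity), ← zpow_neg_one]
  exact zpow_le_zpow_right₀ hp1 (by omega)

theorem Padic.norm_coeff_rescale_exp_sub_one_le (n : ℕ) :
    ‖coeff n (rescale (p : ℚ_[p]) (exp ℚ_[p]) - 1)‖ ≤ (p : ℝ)⁻¹ := by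
  rw [map_sub, coeff_rescale, coeff_exp, coeff_one]
  rcases eq_or_ne n 0 with rfl | hn
  · simp
  · simpa [hn, div_eq_mul_inv] using Padic.norm_natCast_pow_div_factorial_le (p := p) hn

variable {F E : ℚ_[p]⟦X⟧}

theorem Padic.norm_coeff_le_one_of_forall_lt (hF : constantCoeff F = 1)
    (hE : ∀ n, ‖coeff n (E - 1)‖ ≤ (p : ℝ)⁻¹) (hFE : F ^ p = expand p hp.out.ne_zero F * E)
    {n : ℕ} (hn : 0 < n) (ih : ∀ i < n, ‖coeff i F‖ ≤ 1) : ‖coeff n F‖ ≤ 1 := by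
  have hdiv : ∀ i ≤ n, i / p < n := fun i hi =>
    (Nat.div_le_div_right hi).trans_lt (Nat.div_lt_self hn hp.out.one_lt)
  set G : Polynomial ℚ_[p] := trunc n F with hG_def
  have hG : ∀ i, ‖G.coeff i‖ ≤ 1 := fun i => by
    rw [coeff_trunc]
    split_ifs with hi
    exacts [ih i hi, by simp]
  have hexpand : ∀ i ≤ n, ‖coeff i (expand p hp.out.ne_zero F)‖ ≤ 1 := fun i hi => by
    rw [coeff_expand]
    split_ifs
    exacts [ih _ (hdiv i hi), by simp]
  have hexpandG :
      (Polynomial.expand ℚ_[p] p G).coeff n = coeff n (expand p hp.out.ne_zero F) := by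
    rw [Polynomial.coeff_expand hp.out.pos, coeff_expand, coeff_trunc]
    split_ifs with h₁ h₂ <;> first | rfl | exact absurd (hdiv n le_rfl) h₂
  have hsplit : coeff n (F ^ p) = (G ^ p).coeff n + p * coeff n F := by
    have hdvd : X ^ n ∣ F - (G : ℚ_[p]⟦X⟧) := X_pow_dvd_iff.mpr fun i hi => by
      rw [map_sub, hG_def, coeff_coe_trunc_of_lt hi, sub_self]
    have hG0 : constantCoeff (G : ℚ_[p]⟦X⟧) = 1 := by
      rw [← coeff_zero_eq_constantCoeff_apply, hG_def, coeff_coe_trunc_of_lt hn,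
        coeff_zero_eq_constantCoeff_apply, hF]
    have hGn : coeff n (G : ℚ_[p]⟦X⟧) = 0 := by
      rw [Polynomial.coeff_coe, hG_def, coeff_trunc, if_neg (lt_irrefl n)]
    have := coeff_add_pow_of_X_pow_dvd (g := (G : ℚ_[p]⟦X⟧)) hn hdvd p
    rwa [add_sub_cancel, hG0, map_sub, hGn, sub_zero, one_pow, mul_one, ← Polynomial.coe_pow,
      Polynomial.coeff_coe] at this
  have hrhs : ‖coeff n (F ^ p) - coeff n (expand p hp.out.ne_zero F)‖ ≤ (p : ℝ)⁻¹ := by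
    rw [← map_sub, hFE, ← mul_sub_one]
    simpa using norm_coeff_mul_le hexpand (fun j _ => hE j)
  have hpn : ‖(p : ℚ_[p]) * coeff n F‖ ≤ (p : ℝ)⁻¹ := by
    have : (p : ℚ_[p]) * coeff n F = (coeff n (F ^ p) - coeff n (expand p hp.out.ne_zero F)) -
        (G ^ p - Polynomial.expand ℚ_[p] p G).coeff n := by
      rw [Polynomial.coeff_sub, hsplit, hexpandG]
      ring
    rw [this, sub_eq_add_neg]
    refine (IsUltrametricDist.norm_add_le_max _ _).trans (max_le hrhs ?_)
    rw [norm_neg]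
    exact Padic.norm_coeff_pow_sub_expand_le hG n
  rw [norm_mul, Padic.norm_p] at hpn
  exact le_of_mul_le_mul_left (by simpa using hpn) (by simpa using hp.out.pos)

theorem Padic.norm_coeff_le_one_of_pow_eq_expand_mul (hF : constantCoeff F = 1)
    (hE : ∀ n, ‖coeff n (E - 1)‖ ≤ (p : ℝ)⁻¹) (hFE : F ^ p = expand p hp.out.ne_zero F * E)
    (n : ℕ) : ‖coeff n F‖ ≤ 1 := by
  induction n using Nat.strong_induction_on with
  | _ n ih =>
    rcases Nat.eq_zero_or_pos n with rfl | hn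
    · simp [hF]
    · exact Padic.norm_coeff_le_one_of_forall_lt hF hE hFE hn ih

theorem Padic.not_dvd_den_of_norm_le_one {q : ℚ} (hq : ‖(q : ℚ_[p])‖ ≤ 1) : ¬ p ∣ q.den := by
  rintro ⟨c, hc⟩
  have hunit := PadicInt.isUnit_den q hq
  rw [hc, Nat.cast_mul] at hunit
  exact PadicInt.p_nonunit (isUnit_of_mul_isUnit_left hunit)

theorem norm_coeff_artinHasse_le_one (n : ℕ) :
    ‖((coeff n (ArtinHasse p) : ℚ) : ℚ_[p])‖ ≤ 1 := by
  have hFE := congrArg (map (Rat.castHom ℚ_[p])) (artinHasse_pow_eq hp.out)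
  rw [map_pow, map_mul, map_expand, ← rescale_map, map_exp] at hFE
  have hF : constantCoeff (map (Rat.castHom ℚ_[p]) (ArtinHasse p)) = 1 := by
    rw [← coeff_zero_eq_constantCoeff_apply, coeff_map, coeff_zero_eq_constantCoeff_apply,
      constantCoeff_artinHasse, map_one]
  simpa using Padic.norm_coeff_le_one_of_pow_eq_expand_mul hF
    Padic.norm_coeff_rescale_exp_sub_one_le hFE n

end Padic

/-- every coefficient of the Artin–Hasse series lies in ℤ_(p), i.e. is a rational
number whose denominator is prime to p. -/
theorem artinHasse_coeff_padic_integral (p : ℕ) (hp : p.Prime) (n : ℕ) :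
    ¬ p ∣ (PowerSeries.coeff n (ArtinHasse p)).den :=
  haveI : Fact p.Prime := ⟨hp⟩
  Padic.not_dvd_den_of_norm_le_one (norm_coeff_artinHasse_le_one n)
end

section
/- Let p be a prime, A a torsion-free ℤ_(p)-algebra, 𝔞 ⊆ A a divided-power ideal, and P, Q monic polynomials in A[X]. Fix N ≥ 1. If p_n(P) ≡ p_n(Q) mod n·𝔞 for all 1 ≤ n ≤ N, then e_n(P) ≡ e_n(Q) mod 𝔞 for all 1 ≤ n ≤ N. -/
/-- `esymmOfPoly P n` is the n-th elementary symmetric function of the roots of a monic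
polynomial P: (−1)^n times the coefficient of X^{deg P − n}, and 0 for n > deg P. -/
def esymmOfPoly {A : Type*} [CommRing A] (P : Polynomial A) (n : ℕ) : A :=
  if n ≤ P.natDegree then (-1 : A) ^ n * P.coeff (P.natDegree - n) else 0

/-- `newtonPower e n` is the n-th power sum expressed via Newton's identities
p_n = (−1)^{n−1} n e_n + Σ_{i=1}^{n−1} (−1)^{i−1} e_i p_{n−i}
as the universal integer polynomial in the elementary symmetric functions e. -/
def newtonPower {A : Type*} [CommRing A] (e : ℕ → A) : ℕ → A
  | 0 => 0
  | n + 1 => (-1 : A) ^ n * (n + 1 : ℕ) * e (n + 1) +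
      ∑ i ∈ Finset.range n, (-1 : A) ^ i * e (i + 1) * newtonPower e (n - i)
  decreasing_by exact Nat.lt_succ_of_le (Nat.sub_le n i)

/-!
Newton's identities say that `X E'/E = -∑ pₙ Xⁿ` for `E = ∑ (-1)ⁿ eₙ Xⁿ`. If
`pₙ(P) - pₙ(Q) = n bₙ` with `bₙ ∈ 𝔞`, then `E_P` and `E_Q · ∏_{m ≤ N} exp(-bₘ Xᵐ)` have the same
logarithmic derivative up to degree `N`, and over a torsion-free ring the constant term and the
logarithmic derivative determine a power series degree by degree. For `c ∈ 𝔞` the divided-power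
condition, together with the invertibility of the primes `≠ p`, gives `cᵏ ∈ k! 𝔞`; hence
`exp(c Xᵐ) = ∑ (cᵏ / k!) Xᵐᵏ ≡ 1 mod 𝔞`, and so `E_P ≡ E_Q mod 𝔞` up to degree `N`.
-/

open PowerSeries
open scoped Nat

section

variable {A : Type*} [CommRing A]

theorem Nat.factorial_mul_ordCompl_factorial_div (p : ℕ) [hp : Fact p.Prime] (k : ℕ) :
    k ! * ordCompl[p] (k / p)! = p ^ (k / p) * (k / p)! * ordCompl[p] k ! := by
  -- Legendre: `v_p(k!) = v_p((p * (k / p))!) = k / p + v_p((k / p)!)`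
  have hv : ordProj[p] k ! = p ^ (k / p) * ordProj[p] (k / p)! := by
    rw [Nat.factorization_def _ hp.out, Nat.factorization_def _ hp.out, ← pow_add,
      ← Nat.div_add_mod k p, padicValNat_factorial_mul_add _ (Nat.mod_lt _ hp.out.pos),
      padicValNat_factorial_mul, Nat.mul_add_div hp.out.pos, Nat.mod_div_self, add_zero, add_comm]
  calc k ! * ordCompl[p] (k / p)!
      = ordProj[p] k ! * ordCompl[p] k ! * ordCompl[p] (k / p)! := by
        rw [Nat.ordProj_mul_ordCompl_eq_self]
    _ = p ^ (k / p) * (ordProj[p] (k / p)! * ordCompl[p] (k / p)!) * ordCompl[p] k ! := by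
        rw [hv]; ring
    _ = p ^ (k / p) * (k / p)! * ordCompl[p] k ! := by rw [Nat.ordProj_mul_ordCompl_eq_self]

theorem isUnit_natCast_of_not_dvd {p : ℕ} (hinv : ∀ q : ℕ, q.Prime → q ≠ p → IsUnit (q : A))
    {m : ℕ} (hm : ¬ p ∣ m) : IsUnit (m : A) := by
  induction m using induction_on_primes with
  | zero => exact absurd (dvd_zero p) hm
  | one => simp
  | prime_mul q m hq ih =>
    rw [Nat.cast_mul]
    exact (hinv q hq fun h => hm (h ▸ dvd_mul_right q m)).mul (ih fun h => hm (h.mul_left q))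

/-- Write `k = p * q + r`: then `c ^ k = p ^ q * b ^ q * c ^ r` with `b ^ q ∈ q! I` by induction,
and `k!` equals `p ^ q * q!` up to a unit. -/
theorem exists_factorial_mul_eq_pow {p : ℕ} (hp : p.Prime)
    (hinv : ∀ q : ℕ, q.Prime → q ≠ p → IsUnit (q : A)) {I : Ideal A}
    (hdp : ∀ a ∈ I, ∃ b ∈ I, a ^ p = (p : A) * b) {c : A} (hc : c ∈ I) {k : ℕ} (hk : k ≠ 0) :
    ∃ y ∈ I, (k ! : A) * y = c ^ k := by
  have := Fact.mk hp
  induction k using Nat.strong_induction_on generalizing c with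
  | _ k ih =>
    rcases lt_or_ge k p with hkp | hpk
    · have hndvd : ¬ p ∣ k ! := fun h => by have := hp.dvd_factorial.1 h; omega
      obtain ⟨u, hu⟩ := isUnit_natCast_of_not_dvd (A := A) hinv hndvd
      refine ⟨↑u⁻¹ * c ^ k, I.mul_mem_left _ (I.pow_mem_of_mem hc k (by omega)), ?_⟩
      rw [← hu, Units.mul_inv_cancel_left]
    · set q := k / p
      set r := k % p
      obtain ⟨b, hbI, hb⟩ := hdp c hc
      obtain ⟨z, hzI, hz⟩ := ih q (Nat.div_lt_self (by omega) hp.one_lt) hbI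
        (Nat.div_pos hpk hp.pos).ne'
      obtain ⟨u, hu⟩ := isUnit_natCast_of_not_dvd (A := A) hinv
        (Nat.not_dvd_ordCompl hp (Nat.factorial_ne_zero k))
      refine ⟨↑u⁻¹ * ((ordCompl[p] q ! : ℕ) * z * c ^ r), I.mul_mem_left _ (I.mul_mem_right _
        (I.mul_mem_left _ hzI)), ?_⟩
      have hck : c ^ k = (p : A) ^ q * b ^ q * c ^ r := by
        rw [← mul_pow, ← hb, ← pow_mul, ← pow_add, Nat.div_add_mod]
      calc (k ! : A) * (↑u⁻¹ * ((ordCompl[p] q ! : ℕ) * z * c ^ r))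
          = ↑u⁻¹ * ((k ! * ordCompl[p] q ! : ℕ) : A) * z * c ^ r := by push_cast; ring
        _ = ↑u⁻¹ * u * ((p : A) ^ q * (q ! * z) * c ^ r) := by
          rw [Nat.factorial_mul_ordCompl_factorial_div, hu]; push_cast; ring
        _ = c ^ k := by rw [Units.inv_mul, one_mul, hz, hck]

namespace PowerSeries

theorem coeff_X_mul_derivative (F : A⟦X⟧) (n : ℕ) :
    coeff n (X * d⁄dX A F) = n * coeff n F := by
  cases n with
  | zero => simp
  | succ m => rw [coeff_succ_X_mul, coeff_derivative]; push_cast; ring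

theorem coeff_mul_of_constantCoeff_eq_zero {F S : A⟦X⟧} (hS : constantCoeff S = 0) (n : ℕ) :
    coeff n (F * S) = ∑ j ∈ Finset.range n, coeff j F * coeff (n - j) S := by
  rw [coeff_mul, Finset.Nat.sum_antidiagonal_eq_sum_range_succ_mk, Finset.sum_range_succ]
  simp [hS]

theorem X_mul_derivative_mul {F G S T : A⟦X⟧} (hF : X * d⁄dX A F = F * S)
    (hG : X * d⁄dX A G = G * T) : X * d⁄dX A (F * G) = F * G * (S + T) := by
  rw [Derivation.leibniz, smul_eq_mul, smul_eq_mul]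
  linear_combination G * hF + F * hG

theorem X_mul_derivative_prod {ι : Type*} (s : Finset ι) {F S : ι → A⟦X⟧}
    (h : ∀ i ∈ s, X * d⁄dX A (F i) = F i * S i) :
    X * d⁄dX A (∏ i ∈ s, F i) = (∏ i ∈ s, F i) * ∑ i ∈ s, S i := by
  induction s using Finset.cons_induction with
  | empty => simp
  | cons i s hi ih =>
    rw [Finset.prod_cons, Finset.sum_cons]
    exact X_mul_derivative_mul (h i (Finset.mem_cons_self i s))
      (ih fun j hj => h j (Finset.mem_cons_of_mem hj))

theorem X_mul_derivative_subst_X_pow {E : A⟦X⟧} {c : A} (hE : d⁄dX A E = C c * E) {m : ℕ}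
    (hm : m ≠ 0) :
    X * d⁄dX A (E.subst (X ^ m : A⟦X⟧)) = E.subst (X ^ m : A⟦X⟧) * (C ((m : A) * c) * X ^ m) := by
  have hX : HasSubst (X ^ m : A⟦X⟧) := HasSubst.X_pow hm
  obtain ⟨k, rfl⟩ : ∃ k, m = k + 1 := ⟨m - 1, by omega⟩
  have hC : (MvPowerSeries.C c : A⟦X⟧) = C c := rfl
  rw [derivative_subst hX, hE, subst_mul hX, subst_C, hC]
  simp only [Derivation.leibniz_pow, derivative_X, Nat.add_sub_cancel, nsmul_eq_mul, smul_eq_mul,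
    map_mul, map_natCast]
  ring

theorem coeff_eq_of_X_mul_derivative_eq [IsAddTorsionFree A] {F G S T : A⟦X⟧}
    (hF : X * d⁄dX A F = F * S) (hG : X * d⁄dX A G = G * T) (hS : constantCoeff S = 0)
    (h0 : constantCoeff F = constantCoeff G) {N : ℕ} (hST : ∀ n ≤ N, coeff n S = coeff n T) :
    ∀ n ≤ N, coeff n F = coeff n G := by
  have hT : constantCoeff T = 0 := by simpa [hS] using (hST 0 (Nat.zero_le N)).symm
  intro n
  induction n using Nat.strong_induction_on with
  | _ n ih =>
    intro hn
    rcases eq_or_ne n 0 with rfl | hn0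
    · simpa using h0
    · apply nsmul_right_injective hn0
      simp only [nsmul_eq_mul]
      rw [← coeff_X_mul_derivative, ← coeff_X_mul_derivative, hF, hG,
        coeff_mul_of_constantCoeff_eq_zero hS, coeff_mul_of_constantCoeff_eq_zero hT]
      refine Finset.sum_congr rfl fun j hj => ?_
      rw [Finset.mem_range] at hj
      rw [ih j hj (by omega), hST (n - j) (by omega)]

theorem exists_derivative_eq_C_mul [IsAddTorsionFree A] {I : Ideal A} {c : A}
    (hc : ∀ k ≠ 0, ∃ y ∈ I, (k ! : A) * y = c ^ k) :
    ∃ E : A⟦X⟧, constantCoeff E = 1 ∧ E.map (Ideal.Quotient.mk I) = 1 ∧ d⁄dX A E = C c * E := by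
  have : ∀ k, ∃ y : A, (k ! : A) * y = c ^ k ∧ (k ≠ 0 → y ∈ I) := by
    intro k
    rcases eq_or_ne k 0 with rfl | hk
    · exact ⟨1, by simp, fun h => absurd rfl h⟩
    · obtain ⟨y, hyI, hy⟩ := hc k hk
      exact ⟨y, hy, fun _ => hyI⟩
  choose y hy hyI using this
  have hy0 : y 0 = 1 := by simpa using hy 0
  -- `mk y = exp (c X)`
  refine ⟨mk y, by simp [hy0], ?_, ?_⟩
  · ext n
    rcases eq_or_ne n 0 with rfl | hn
    · simp [hy0]
    · simp [coeff_one, hn, Ideal.Quotient.eq_zero_iff_mem.2 (hyI n hn)]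
  · ext n
    rw [coeff_derivative, coeff_C_mul, coeff_mk, coeff_mk]
    apply nsmul_right_injective (Nat.factorial_ne_zero n)
    simp only [nsmul_eq_mul]
    calc (n ! : A) * (y (n + 1) * (n + 1)) = ((n + 1)! : A) * y (n + 1) := by
          push_cast [Nat.factorial_succ]; ring
      _ = c ^ (n + 1) := hy _
      _ = n ! * (c * y n) := by rw [pow_succ', ← hy n]; ring

theorem exists_X_mul_derivative_eq_mul_sum_C_mul_X_pow [IsAddTorsionFree A] {I : Ideal A}
    (hI : ∀ c ∈ I, ∀ k ≠ 0, ∃ y ∈ I, (k ! : A) * y = c ^ k) {s : Finset ℕ} {c : ℕ → A}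
    (hs : 0 ∉ s) (hc : ∀ m ∈ s, c m ∈ I) :
    ∃ W : A⟦X⟧, constantCoeff W = 1 ∧ W.map (Ideal.Quotient.mk I) = 1 ∧
      X * d⁄dX A W = W * ∑ m ∈ s, C ((m : A) * c m) * X ^ m := by
  choose! E hE0 hEI hE using fun m (hm : m ∈ s) => exists_derivative_eq_C_mul (hI _ (hc m hm))
  have hm0 {m : ℕ} (hm : m ∈ s) : m ≠ 0 := ne_of_mem_of_not_mem hm hs
  refine ⟨∏ m ∈ s, (E m).subst (X ^ m : A⟦X⟧), ?_, ?_,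
    X_mul_derivative_prod s fun m hm => X_mul_derivative_subst_X_pow (hE m hm) (hm0 hm)⟩
  · rw [map_prod]
    refine Finset.prod_eq_one fun m hm => ?_
    rw [constantCoeff_subst_X_pow (hm0 hm), hE0 m hm, map_one]
  · rw [map_prod]
    refine Finset.prod_eq_one fun m hm => ?_
    -- `map_subst` is stated for `MvPowerSeries.map`
    change MvPowerSeries.map _ _ = _
    rw [map_subst (HasSubst.X_pow (hm0 hm)), hEI m hm]
    exact subst_C 1

end PowerSeries

/-- `∏ (1 - x_i X)` when `e` are the elementary symmetric functions of the `x_i`. -/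
def esymmSeries (e : ℕ → A) : A⟦X⟧ := mk fun n => (-1) ^ n * e n

theorem X_mul_derivative_esymmSeries {e : ℕ → A} (he : e 0 = 1) :
    X * d⁄dX A (esymmSeries e) = esymmSeries e * -mk (newtonPower e) := by
  ext n
  rw [coeff_X_mul_derivative, coeff_mul_of_constantCoeff_eq_zero (by simp [newtonPower])]
  simp only [esymmSeries, coeff_mk, map_neg]
  cases n with
  | zero => simp
  | succ n =>
    have hterm : ∀ i ∈ Finset.range n, (-1 : A) ^ (i + 1) * e (i + 1) *
        -newtonPower e (n + 1 - (i + 1)) = (-1) ^ i * e (i + 1) * newtonPower e (n - i) := by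
      intro i _
      rw [Nat.add_sub_add_right]
      ring
    rw [Finset.sum_range_succ', Finset.sum_congr rfl hterm, Nat.sub_zero, newtonPower.eq_2, he]
    push_cast
    ring

theorem sub_mem_of_newtonPower_sub_mem [IsAddTorsionFree A] {I : Ideal A}
    (hI : ∀ c ∈ I, ∀ k ≠ 0, ∃ y ∈ I, (k ! : A) * y = c ^ k) {e e' : ℕ → A} (he : e 0 = 1)
    (he' : e' 0 = 1) {N : ℕ}
    (h : ∀ n, 1 ≤ n → n ≤ N → ∃ b ∈ I, newtonPower e n - newtonPower e' n = n * b) :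
    ∀ n ≤ N, e n - e' n ∈ I := by
  choose! b hbI hb using h
  obtain ⟨W, hW0, hWI, hW⟩ := exists_X_mul_derivative_eq_mul_sum_C_mul_X_pow hI
    (s := Finset.Icc 1 N) (c := fun m => -b m) (by simp)
    fun m hm => I.neg_mem (hbI m (Finset.mem_Icc.1 hm).1 (Finset.mem_Icc.1 hm).2)
  have hlog : ∀ n ≤ N, coeff n (-mk (newtonPower e)) =
      coeff n (-mk (newtonPower e') + ∑ m ∈ Finset.Icc 1 N, C ((m : A) * -b m) * X ^ m) := by
    intro n hn
    simp only [map_add, map_neg, map_sum, coeff_mk, coeff_C_mul_X_pow, Finset.sum_ite_eq,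
      Finset.mem_Icc]
    split_ifs with hn1
    · linear_combination (-1 : A) * hb n hn1.1 hn1.2
    · obtain rfl : n = 0 := by omega
      simp [newtonPower]
  have hcoeff := coeff_eq_of_X_mul_derivative_eq (X_mul_derivative_esymmSeries he)
    (X_mul_derivative_mul (X_mul_derivative_esymmSeries he') hW) (by simp [newtonPower])
    (by simp [hW0, esymmSeries, he, he']) hlog
  intro n hn
  have hmod := congrArg (Ideal.Quotient.mk I) (hcoeff n hn)
  rw [← coeff_map, ← coeff_map, map_mul, hWI, mul_one] at hmod
  simp only [esymmSeries, coeff_map, coeff_mk, map_mul] at hmod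
  rw [← Ideal.Quotient.eq]
  exact ((isUnit_neg_one.pow n).map _).mul_left_cancel hmod

end

theorem psum_deep_congr_imp_esymm_congr_general {A : Type*} [CommRing A] (p : ℕ) (hp : p.Prime)
    (htf : ∀ (n : ℤ) (a : A), n ≠ 0 → n • a = 0 → a = 0)
    (hinv : ∀ q : ℕ, q.Prime → q ≠ p → IsUnit (q : A))
    (I : Ideal A) (hdp : ∀ a ∈ I, ∃ b ∈ I, a ^ p = (p : A) * b)
    (P Q : Polynomial A) (hP : P.Monic) (hQ : Q.Monic) (N : ℕ)
    (h : ∀ n : ℕ, 1 ≤ n → n ≤ N →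
      ∃ b ∈ I, newtonPower (esymmOfPoly P) n - newtonPower (esymmOfPoly Q) n = (n : A) * b) :
    ∀ n : ℕ, 1 ≤ n → n ≤ N → esymmOfPoly P n - esymmOfPoly Q n ∈ I := by
  have : IsAddTorsionFree A := ⟨fun n hn a b hab => sub_eq_zero.1 <|
    htf n (a - b) (by exact_mod_cast hn) (by simpa [smul_sub, sub_eq_zero] using hab)⟩
  have hesymm_zero {F : Polynomial A} (hF : F.Monic) : esymmOfPoly F 0 = 1 := by
    simp [esymmOfPoly, hF.coeff_natDegree]
  intro n _ hn
  exact sub_mem_of_newtonPower_sub_mem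
    (fun c hc k hk => exists_factorial_mul_eq_pow hp hinv hdp hc hk)
    (hesymm_zero hP) (hesymm_zero hQ) h n hn

/-- Let A be a torsion-free ℤ_(p)-algebra, 𝔞 a divided-power ideal, and P, Q monic
polynomials in A[X].  If p_n(P) ≡ p_n(Q) mod n·𝔞 for all 1 ≤ n ≤ N, then
e_n(P) ≡ e_n(Q) mod 𝔞 for all 1 ≤ n ≤ N. -/
theorem psum_deep_congr_imp_esymm_congr {A : Type*} [CommRing A] (p : ℕ) (hp : p.Prime)
    (htf : ∀ (n : ℤ) (a : A), n ≠ 0 → n • a = 0 → a = 0)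
    (hinv : ∀ q : ℕ, q.Prime → q ≠ p → IsUnit (q : A))
    (I : Ideal A) (hdp : ∀ a ∈ I, ∃ b ∈ I, a ^ p = (p : A) * b)
    (P Q : Polynomial A) (hP : P.Monic) (hQ : Q.Monic) (N : ℕ) (hN : 1 ≤ N)
    (h : ∀ n : ℕ, 1 ≤ n → n ≤ N →
      ∃ b ∈ I, newtonPower (esymmOfPoly P) n - newtonPower (esymmOfPoly Q) n = (n : A) * b) :
    ∀ n : ℕ, 1 ≤ n → n ≤ N → esymmOfPoly P n - esymmOfPoly Q n ∈ I :=
  psum_deep_congr_imp_esymm_congr_general p hp htf hinv I hdp P Q hP hQ N h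
end
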